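/- The function η_N(x) = π^{−n/2} L_{M−1}^{(n/2)}(|x|²) e^{−|x|²}, N = 2M, admits the representation η_N(x) = π^{−n/2} Σ_{j=0}^{M−1} ((−1)^j/(j! 4^j)) Δ^j e^{−|x|²}. -/

import Mathlib

/-- The generalized Laguerre polynomial
`L_k^{(γ)}(x) = ∑_{i=0}^k (-1)^i binom(k+γ, k-i) x^i / i!`. -/
noncomputable def genLaguerre (k : ℕ) (γ : ℂ) (x : ℂ) : ℂ :=
  ∑ i ∈ Finset.range (k + 1),
    ((-1) ^ i / (Nat.factorial i : ℂ)) *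
      ((∏ m ∈ Finset.range (k - i), (γ + i + 1 + m)) / (Nat.factorial (k - i) : ℂ)) * x ^ i

/-- The Laplacian on `ℝⁿ`. -/
noncomputable def laplacian {n : ℕ} (f : EuclideanSpace ℝ (Fin n) → ℂ) :
    EuclideanSpace ℝ (Fin n) → ℂ := fun x =>
  ∑ i : Fin n,
    iteratedFDeriv ℝ 2 f x ![EuclideanSpace.single i (1 : ℝ), EuclideanSpace.single i (1 : ℝ)]

/-- The generating function `η_{2M}(x) = π^{-n/2} L_{M-1}^{(n/2)}(|x|²) e^{-|x|²}`. -/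
noncomputable def etaFun (n M : ℕ) (x : EuclideanSpace ℝ (Fin n)) : ℂ :=
  (Real.pi : ℂ) ^ (-(n : ℂ) / 2) * genLaguerre (M - 1) ((n : ℂ) / 2) ((‖x‖ : ℂ) ^ 2) *
    Complex.exp (-(‖x‖ : ℂ) ^ 2)


/-!
Writing `Δ (P(|x|²) e^{-|x|²}) = (T P)(|x|²) e^{-|x|²}` turns the Laplacian into a second-order
operator `T` on polynomials, with the dimension entering only through the constant `2n = 4(γ + 1)`,
`γ = n/2 - 1`. Combining the Laguerre differential equation with a three-term relation shows
`T L_j^{(γ)} = -4(j+1) L_{j+1}^{(γ)}`, hence `Δ^j e^{-|x|²} = (-4)^j j! L_j^{(γ)}(|x|²) e^{-|x|²}`.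
Summing, the Pascal rule `L_k^{(γ+1)} = ∑_{l ≤ k} L_l^{(γ)}` produces `L_{M-1}^{(n/2)}`.
-/

open Polynomial Finset
open scoped Nat

lemma ascPochhammer_eval_eq_prod_range {R : Type*} [CommSemiring R] (k : ℕ) (z : R) :
    (ascPochhammer R k).eval z = ∏ m ∈ range k, (z + m) := by
  induction k with
  | zero => simp
  | succ k ih => rw [ascPochhammer_succ_eval, ih, prod_range_succ]

lemma ascPochhammer_succ_eval_left {R : Type*} [CommSemiring R] (k : ℕ) (z : R) :
    (ascPochhammer R (k + 1)).eval z = z * (ascPochhammer R k).eval (z + 1) := by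
  simp [ascPochhammer_succ_left, eval_comp]

-- The coefficient of `X^i` in `L_{i+k}^{(γ)}`; indexing by `k = j - i` avoids truncated subtraction.
noncomputable def laguerreCoeff (γ : ℂ) (i k : ℕ) : ℂ :=
  (-1) ^ i / i ! * ((ascPochhammer ℂ k).eval (γ + i + 1) / k !)

noncomputable def laguerrePoly (j : ℕ) (γ : ℂ) : ℂ[X] :=
  ∑ i ∈ range (j + 1), C (laguerreCoeff γ i (j - i)) * X ^ i

lemma genLaguerre_eq_eval (j : ℕ) (γ x : ℂ) : genLaguerre j γ x = (laguerrePoly j γ).eval x := by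
  simp [genLaguerre, laguerrePoly, laguerreCoeff, eval_finsetSum, ascPochhammer_eval_eq_prod_range]

lemma coeff_laguerrePoly_add (γ : ℂ) (i k : ℕ) :
    (laguerrePoly (i + k) γ).coeff i = laguerreCoeff γ i k := by
  simp [laguerrePoly, finsetSum_coeff]

lemma coeff_laguerrePoly_of_lt {j i : ℕ} (γ : ℂ) (h : j < i) : (laguerrePoly j γ).coeff i = 0 := by
  rw [laguerrePoly, finsetSum_coeff]
  refine sum_eq_zero fun l hl => ?_
  rw [coeff_C_mul_X_pow, if_neg (by simp at hl; omega)]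

lemma laguerreCoeff_zero_right (γ : ℂ) (i : ℕ) : laguerreCoeff γ i 0 = (-1) ^ i / i ! := by
  simp [laguerreCoeff]

lemma laguerreCoeff_succ_left (γ : ℂ) (i k : ℕ) :
    ((i : ℂ) + 1) * (γ + i + 1) * laguerreCoeff γ (i + 1) k
      = -((k : ℂ) + 1) * laguerreCoeff γ i (k + 1) := by
  have h : γ + ↑(i + 1) + 1 = γ + i + 1 + 1 := by push_cast; ring
  simp only [laguerreCoeff, h, ascPochhammer_succ_eval_left, Nat.factorial_succ]
  push_cast
  field_simp
  ring

lemma laguerreCoeff_succ_succ (γ : ℂ) (i k : ℕ) :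
    ((i : ℂ) + k + 2) * laguerreCoeff γ (i + 1) (k + 1)
      = (2 * i + k + γ + 3) * laguerreCoeff γ (i + 1) k - laguerreCoeff γ i (k + 1) := by
  have h : γ + ↑(i + 1) + 1 = γ + i + 1 + 1 := by push_cast; ring
  simp only [laguerreCoeff, h, ascPochhammer_succ_eval k (γ + i + 1 + 1),
    ascPochhammer_succ_eval_left k (γ + i + 1), Nat.factorial_succ]
  push_cast
  field_simp
  ring

lemma laguerreCoeff_zero_succ (γ : ℂ) (k : ℕ) :
    ((k : ℂ) + 1) * laguerreCoeff γ 0 (k + 1) = (k + γ + 1) * laguerreCoeff γ 0 k := by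
  simp only [laguerreCoeff, ascPochhammer_succ_eval, Nat.factorial_succ]
  push_cast
  field_simp
  ring

lemma laguerreCoeff_pascal (γ : ℂ) (i k : ℕ) :
    laguerreCoeff γ i (k + 1) = laguerreCoeff γ i k + laguerreCoeff (γ - 1) i (k + 1) := by
  have h : γ - 1 + i + 1 + 1 = γ + i + 1 := by ring
  simp only [laguerreCoeff, ascPochhammer_succ_eval k (γ + i + 1),
    ascPochhammer_succ_eval_left k (γ - 1 + i + 1), h, Nat.factorial_succ]
  push_cast
  field_simp
  ring

lemma coeff_laguerrePoly_self (j : ℕ) (γ : ℂ) : (laguerrePoly j γ).coeff j = (-1) ^ j / j ! := by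
  simpa [laguerreCoeff_zero_right] using coeff_laguerrePoly_add γ j 0

lemma coeff_laguerrePoly_recurrence (j : ℕ) (γ : ℂ) (i : ℕ) :
    ((i : ℂ) + 1) * (γ + i + 1) * (laguerrePoly j γ).coeff (i + 1)
      = ((i : ℂ) - j) * (laguerrePoly j γ).coeff i := by
  rcases lt_trichotomy i j with h | rfl | h
  · obtain ⟨k, rfl⟩ := Nat.exists_eq_add_of_le h
    rw [coeff_laguerrePoly_add, show i + 1 + k = i + (k + 1) by ring, coeff_laguerrePoly_add,
      laguerreCoeff_succ_left]
    push_cast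
    ring
  · simp [coeff_laguerrePoly_of_lt γ (Nat.lt_succ_self i)]
  · simp [coeff_laguerrePoly_of_lt γ h, coeff_laguerrePoly_of_lt γ (h.trans (Nat.lt_succ_self i))]

lemma coeff_laguerrePoly_succ_succ (j : ℕ) (γ : ℂ) (i : ℕ) :
    ((j : ℂ) + 1) * (laguerrePoly (j + 1) γ).coeff (i + 1)
      = (j + γ + i + 2) * (laguerrePoly j γ).coeff (i + 1) - (laguerrePoly j γ).coeff i := by
  rcases lt_trichotomy i j with h | rfl | h
  · obtain ⟨k, rfl⟩ := Nat.exists_eq_add_of_le h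
    have h₁ := coeff_laguerrePoly_add γ (i + 1) (k + 1)
    have h₂ := coeff_laguerrePoly_add γ (i + 1) k
    have h₃ := coeff_laguerrePoly_add γ i (k + 1)
    rw [show i + (k + 1) = i + 1 + k by ring] at h₃
    rw [show i + 1 + k + 1 = i + 1 + (k + 1) by ring, h₁, h₂, h₃]
    push_cast
    linear_combination laguerreCoeff_succ_succ γ i k
  · rw [coeff_laguerrePoly_self, coeff_laguerrePoly_self,
      coeff_laguerrePoly_of_lt γ (Nat.lt_succ_self i)]
    push_cast [Nat.factorial_succ]
    field_simp
    ring
  · simp [coeff_laguerrePoly_of_lt γ h, coeff_laguerrePoly_of_lt γ (h.trans (Nat.lt_succ_self i)),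
      coeff_laguerrePoly_of_lt γ (Nat.succ_lt_succ h)]

lemma coeff_laguerrePoly_succ (j : ℕ) (γ : ℂ) (i : ℕ) :
    (laguerrePoly (j + 1) γ).coeff i
      = (laguerrePoly j γ).coeff i + (laguerrePoly (j + 1) (γ - 1)).coeff i := by
  rcases lt_trichotomy i (j + 1) with h | rfl | h
  · obtain ⟨k, rfl⟩ := Nat.exists_eq_add_of_le (Nat.lt_succ_iff.mp h)
    rw [show i + k + 1 = i + (k + 1) by ring, coeff_laguerrePoly_add, coeff_laguerrePoly_add,
      coeff_laguerrePoly_add, laguerreCoeff_pascal]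
  · simp [coeff_laguerrePoly_self, coeff_laguerrePoly_of_lt γ (Nat.lt_succ_self j)]
  · simp [coeff_laguerrePoly_of_lt γ h, coeff_laguerrePoly_of_lt (γ - 1) h,
      coeff_laguerrePoly_of_lt γ ((Nat.lt_succ_self j).trans h)]

theorem laguerrePoly_ode (j : ℕ) (γ : ℂ) :
    X * derivative (derivative (laguerrePoly j γ)) + (C (γ + 1) - X) * derivative (laguerrePoly j γ)
      + C (j : ℂ) * laguerrePoly j γ = 0 := by
  ext i
  rcases i with _ | i
  · simp only [coeff_add, sub_mul, coeff_sub, coeff_X_mul_zero, coeff_C_mul, coeff_derivative,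
      coeff_zero]
    push_cast
    linear_combination coeff_laguerrePoly_recurrence j γ 0
  · simp only [coeff_add, sub_mul, coeff_sub, coeff_X_mul, coeff_C_mul, coeff_derivative,
      coeff_zero]
    have h := coeff_laguerrePoly_recurrence j γ (i + 1)
    push_cast at h ⊢
    linear_combination h

theorem C_mul_laguerrePoly_succ (j : ℕ) (γ : ℂ) :
    C ((j : ℂ) + 1) * laguerrePoly (j + 1) γ
      = C (j + γ + 1) * laguerrePoly j γ
        + X * (derivative (laguerrePoly j γ) - laguerrePoly j γ) := by
  ext i
  rcases i with _ | i
  · have h₀ : (laguerrePoly j γ).coeff 0 = laguerreCoeff γ 0 j := by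
      simpa using coeff_laguerrePoly_add γ 0 j
    have h₁ : (laguerrePoly (j + 1) γ).coeff 0 = laguerreCoeff γ 0 (j + 1) := by
      simpa using coeff_laguerrePoly_add γ 0 (j + 1)
    simp only [coeff_add, coeff_C_mul, coeff_X_mul_zero, add_zero, h₀, h₁]
    linear_combination laguerreCoeff_zero_succ γ j
  · simp only [coeff_add, coeff_C_mul, coeff_X_mul, coeff_sub, coeff_derivative]
    linear_combination coeff_laguerrePoly_succ_succ j γ i

lemma laguerrePoly_zero (γ : ℂ) : laguerrePoly 0 γ = 1 := by
  simp [laguerrePoly, laguerreCoeff]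

theorem laguerrePoly_succ (j : ℕ) (γ : ℂ) :
    laguerrePoly (j + 1) γ = laguerrePoly j γ + laguerrePoly (j + 1) (γ - 1) := by
  ext i
  simpa using coeff_laguerrePoly_succ j γ i

theorem sum_range_laguerrePoly (k : ℕ) (γ : ℂ) :
    ∑ l ∈ range (k + 1), laguerrePoly l (γ - 1) = laguerrePoly k γ := by
  induction k with
  | zero => simp [laguerrePoly_zero]
  | succ k ih => rw [sum_range_succ, ih, ← laguerrePoly_succ]

-- `Δ (P(|x|²) e^{-|x|²}) = (laplacianPoly (2 n) P)(|x|²) e^{-|x|²}` on `ℝⁿ`.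
noncomputable def laplacianPoly (c : ℂ) (P : ℂ[X]) : ℂ[X] :=
  4 * X * (derivative (derivative P) - 2 * derivative P + P) + C c * (derivative P - P)

theorem laplacianPoly_laguerrePoly (j : ℕ) (γ : ℂ) :
    laplacianPoly (4 * (γ + 1)) (laguerrePoly j γ)
      = C (-4 * ((j : ℂ) + 1)) * laguerrePoly (j + 1) γ := by
  have ode := laguerrePoly_ode j γ
  have hrec := C_mul_laguerrePoly_succ j γ
  simp only [laplacianPoly, map_mul, map_add, map_neg, map_one, map_ofNat] at ode hrec ⊢
  linear_combination 4 * ode + 4 * hrec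

lemma laplacianPoly_C_mul (c u : ℂ) (P : ℂ[X]) :
    laplacianPoly c (C u * P) = C u * laplacianPoly c P := by
  simp only [laplacianPoly, derivative_C_mul]
  ring

theorem laplacianPoly_iterate_one (j : ℕ) (γ : ℂ) :
    (laplacianPoly (4 * (γ + 1)))^[j] 1 = C ((-4) ^ j * j ! : ℂ) * laguerrePoly j γ := by
  induction j with
  | zero => simp [laguerrePoly_zero]
  | succ j ih =>
    rw [Function.iterate_succ_apply', ih, laplacianPoly_C_mul, laplacianPoly_laguerrePoly,
      ← mul_assoc, ← C_mul]
    congr 2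
    push_cast [Nat.factorial_succ, pow_succ]
    ring

section RadialLaplacian

variable {E : Type*} [NormedAddCommGroup E] [InnerProductSpace ℝ E]

variable (E) in
noncomputable def ofRealInnerSL : E →L[ℝ] E →L[ℝ] ℂ :=
  (ContinuousLinearMap.compL ℝ E ℝ ℂ Complex.ofRealCLM).comp (innerSL ℝ)

@[simp]
lemma ofRealInnerSL_apply (y u : E) : ofRealInnerSL E y u = (inner ℝ y u : ℂ) := rfl

lemma hasFDerivAt_comp_normSq {g : ℝ → ℂ} {g' : ℂ} {x : E} (hg : HasDerivAt g g' (‖x‖ ^ 2)) :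
    HasFDerivAt (fun y => g (‖y‖ ^ 2)) ((2 * g') • ofRealInnerSL E x) x := by
  refine (hg.hasFDerivAt.comp x (hasStrictFDerivAt_norm_sq x).hasFDerivAt).congr_fderiv ?_
  ext u
  simp
  ring

lemma fderiv_comp_normSq {g g' : ℝ → ℂ} (hg : ∀ t, HasDerivAt g (g' t) t) :
    fderiv ℝ (fun y : E => g (‖y‖ ^ 2)) = fun y => (2 * g' (‖y‖ ^ 2)) • ofRealInnerSL E y :=
  funext fun _ => (hasFDerivAt_comp_normSq (hg _)).fderiv

lemma iteratedFDeriv_two_comp_normSq {g g' g'' : ℝ → ℂ} (hg : ∀ t, HasDerivAt g (g' t) t)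
    (hg' : ∀ t, HasDerivAt g' (g'' t) t) (x u v : E) :
    iteratedFDeriv ℝ 2 (fun y => g (‖y‖ ^ 2)) x ![u, v]
      = 2 * inner ℝ u v * g' (‖x‖ ^ 2) + 4 * inner ℝ x u * inner ℝ x v * g'' (‖x‖ ^ 2) := by
  have h : HasFDerivAt (fun y => (2 * g' (‖y‖ ^ 2)) • ofRealInnerSL E y) _ x :=
    (hasFDerivAt_comp_normSq ((hg' _).const_mul 2)).smul (ofRealInnerSL E).hasFDerivAt
  rw [iteratedFDeriv_two_apply, fderiv_comp_normSq hg, h.fderiv]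
  simp
  ring

end RadialLaplacian

theorem laplacian_comp_normSq {n : ℕ} {g g' g'' : ℝ → ℂ} (hg : ∀ t, HasDerivAt g (g' t) t)
    (hg' : ∀ t, HasDerivAt g' (g'' t) t) (x : EuclideanSpace ℝ (Fin n)) :
    laplacian (fun y => g (‖y‖ ^ 2)) x = 2 * n * g' (‖x‖ ^ 2) + 4 * ‖x‖ ^ 2 * g'' (‖x‖ ^ 2) := by
  have hx : ∑ i, (x i : ℂ) ^ 2 = (‖x‖ : ℂ) ^ 2 := by
    exact_mod_cast (EuclideanSpace.real_norm_sq_eq x).symm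
  simp only [laplacian, iteratedFDeriv_two_comp_normSq hg hg', EuclideanSpace.inner_single_right]
  simp [sum_add_distrib, ← sum_mul, mul_assoc, ← sq, ← mul_sum, hx]
  ring

noncomputable def polyExpNeg (P : ℂ[X]) (t : ℝ) : ℂ :=
  P.eval (t : ℂ) * Complex.exp (-t)

lemma hasDerivAt_polyExpNeg (P : ℂ[X]) (t : ℝ) :
    HasDerivAt (polyExpNeg P) (polyExpNeg (derivative P - P) t) t := by
  have h := ((P.hasDerivAt (t : ℂ)).mul (hasDerivAt_neg (t : ℂ)).cexp).comp_ofReal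
  refine h.congr_deriv ?_
  simp only [polyExpNeg, eval_sub]
  ring

theorem laplacianPoly_semiconj_laplacian (n : ℕ) :
    Function.Semiconj (fun P (y : EuclideanSpace ℝ (Fin n)) => polyExpNeg P (‖y‖ ^ 2))
      (laplacianPoly (2 * n)) laplacian := by
  intro P
  funext x
  rw [laplacian_comp_normSq (hasDerivAt_polyExpNeg _) (hasDerivAt_polyExpNeg _)]
  simp only [polyExpNeg, laplacianPoly, derivative_sub, eval_add, eval_sub, eval_mul, eval_C,
    eval_X, eval_ofNat]
  push_cast
  ring

theorem laplacian_iterate_gaussian (n j : ℕ) :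
    laplacian^[j] (fun y : EuclideanSpace ℝ (Fin n) => Complex.exp (-(‖y‖ : ℂ) ^ 2))
      = fun y => ((-4) ^ j * j ! : ℂ) * polyExpNeg (laguerrePoly j (n / 2 - 1)) (‖y‖ ^ 2) := by
  have hG : (fun y : EuclideanSpace ℝ (Fin n) => Complex.exp (-(‖y‖ : ℂ) ^ 2))
      = fun y => polyExpNeg 1 (‖y‖ ^ 2) := by
    funext y
    simp [polyExpNeg]
  have hc : (2 * n : ℂ) = 4 * ((n / 2 - 1) + 1) := by ring
  rw [hG, ← (laplacianPoly_semiconj_laplacian n).iterate_right j 1, hc, laplacianPoly_iterate_one]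
  funext y
  simp [polyExpNeg, mul_assoc]

/-- `η_{2M}(x) = π^{-n/2} ∑_{j=0}^{M-1} ((-1)^j/(j! 4^j)) Δ^j e^{-|x|²}`. -/
theorem stmt8 (n M : ℕ) (hM : 1 ≤ M) (x : EuclideanSpace ℝ (Fin n)) :
    etaFun n M x =
      (Real.pi : ℂ) ^ (-(n : ℂ) / 2) *
        ∑ j ∈ Finset.range M,
          ((-1) ^ j / ((Nat.factorial j : ℂ) * 4 ^ j)) *
            (laplacian^[j] (fun y : EuclideanSpace ℝ (Fin n) => Complex.exp (-(‖y‖ : ℂ) ^ 2))) x := by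
  obtain ⟨k, rfl⟩ : ∃ k, M = k + 1 := ⟨M - 1, by omega⟩
  have hcoeff (j : ℕ) : ((-1) ^ j / ((j ! : ℂ) * 4 ^ j)) * ((-4) ^ j * j ! : ℂ) = 1 := by
    rw [neg_pow (4 : ℂ)]
    field_simp
    simp [← pow_mul, Nat.factorial_ne_zero]
  simp only [laplacian_iterate_gaussian, ← mul_assoc, hcoeff, one_mul]
  rw [etaFun, mul_assoc, Nat.add_sub_cancel, genLaguerre_eq_eval, ← sum_range_laguerrePoly]
  simp [polyExpNeg, eval_finsetSum, sum_mul]
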